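/- Let S be a finite singleton-rich semigroup on which the relation ≪ is transitive. Define the sharp product s ♯ᵉ t = st if s⁺ = (st)⁺, t* = (st)*, and s* = t⁺ = e, and 0 otherwise, and define on ℂS the binary operation Z(s) ∗ Z(t) = Σ_{s' ≪ s, t' ≪ t} s' ♯^{φ^{((s')⁺ s, t (t')*)}} t', where Z(x) = Σ_{x' ≪ x} x'. Then Z(s) ∗ Z(t) = Z(st) for all s, t ∈ S; consequently Z : (ℂS, ∗) → ℂS is an isomorphism of ℂ-algebras. -/

import Mathlib

open scoped Classical

/-- φ*(s): the idempotent right identities of `s`. -/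
def rIds {S : Type*} [Mul S] (s : S) : Set S := {e | e * e = e ∧ s * e = s}

/-- φ⁺(s): the idempotent left identities of `s`. -/
def lIds {S : Type*} [Mul S] (s : S) : Set S := {e | e * e = e ∧ e * s = s}

/-- `x` is the (necessarily unique) element of a singleton kernel (minimal ideal) of the
subsemigroup `T`: `{x}` is an ideal of `T`, hence the minimal ideal of `T`. -/
def IsKer {S : Type*} [Semigroup S] (T : Subsemigroup S) (x : S) : Prop :=
  x ∈ T ∧ ∀ a ∈ T, a * x = x ∧ x * a = x

/-- The natural partial order on idempotents: `e ≤ f` iff `ef = fe = e`. -/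
def nle {S : Type*} [Mul S] (e f : S) : Prop := e * f = e ∧ f * e = e

/-- The relation `≪`: `s ≪ t` iff `s = s⁺ t s*`, where `sa s = s*` and `pl s = s⁺`. -/
def ll {S : Type*} [Mul S] (sa pl : S → S) (s t : S) : Prop := s = pl s * t * sa s

/-- φ(x,y) = (x* y)⁺. -/
def phiF {S : Type*} [Mul S] (sa pl : S → S) (x y : S) : S := pl (sa x * y)

/-- ψ(x,y) = (x y⁺)*. -/
def psiF {S : Type*} [Mul S] (sa pl : S → S) (x y : S) : S := sa (x * pl y)

/-- The φ-sequence: `(s^φ₀, t^φ₀) = (s, t)`,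
`s^φ_{i+1} = s^φ_i φ(s^φ_i, t^φ_i)`, `t^φ_{i+1} = (s^φ_i)* t^φ_i`. -/
def phiSeq {S : Type*} [Mul S] (sa pl : S → S) (s t : S) : ℕ → S × S
  | 0 => (s, t)
  | i + 1 =>
      let p := phiSeq sa pl s t i
      (p.1 * phiF sa pl p.1 p.2, sa p.1 * p.2)

/-- The ψ-sequence: `(s^ψ₀, t^ψ₀) = (s, t)`,
`s^ψ_{i+1} = s^ψ_i (t^ψ_i)⁺`, `t^ψ_{i+1} = ψ(s^ψ_i, t^ψ_i) t^ψ_i`. -/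
def psiSeq {S : Type*} [Mul S] (sa pl : S → S) (s t : S) : ℕ → S × S
  | 0 => (s, t)
  | i + 1 =>
      let p := psiSeq sa pl s t i
      (p.1 * pl p.2, psiF sa pl p.1 p.2 * p.2)

/-- `e` is the stable (eventual) value `φ^{(s,t)}` of the sequence `φ(s^φ_i, t^φ_i)`. -/
def IsPhiLim {S : Type*} [Mul S] (sa pl : S → S) (s t e : S) : Prop :=
  ∃ N : ℕ, ∀ i ≥ N, phiF sa pl (phiSeq sa pl s t i).1 (phiSeq sa pl s t i).2 = e

/-- `e` is the stable (eventual) value `ψ^{(s,t)}` of the sequence `ψ(s^ψ_i, t^ψ_i)`. -/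
def IsPsiLim {S : Type*} [Mul S] (sa pl : S → S) (s t e : S) : Prop :=
  ∃ N : ℕ, ∀ i ≥ N, psiF sa pl (psiSeq sa pl s t i).1 (psiSeq sa pl s t i).2 = e

/-- `Z(x) = Σ_{x' ≪ x} x'` as an element of `ℂS`. -/
noncomputable def Zb {S : Type*} [Semigroup S] [Fintype S] (sa pl : S → S) (x : S) :
    MonoidAlgebra ℂ S :=
  ∑ x' ∈ Finset.univ.filter (fun x' => ll sa pl x' x), MonoidAlgebra.single x' (1 : ℂ)

/-- The sharp product `s ♯ᵉ t`: it equals `st` if `s⁺ = (st)⁺`, `t* = (st)*` and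
`s* = t⁺ = e`, and `0` otherwise. -/
noncomputable def sharpE {S : Type*} [Semigroup S] [Fintype S] (sa pl : S → S)
    (e s t : S) : MonoidAlgebra ℂ S :=
  if pl s = pl (s * t) ∧ sa t = sa (s * t) ∧ sa s = e ∧ pl t = e then
    MonoidAlgebra.single (s * t) (1 : ℂ)
  else 0

/-- The linear extension of `Z` to `ℂS`: `(Z f)(s') = Σ_{s' ≪ s} f(s)`. -/
noncomputable def Zhat {S : Type*} [Semigroup S] [Fintype S] (sa pl : S → S) :
    MonoidAlgebra ℂ S → MonoidAlgebra ℂ S := fun f =>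
  MonoidAlgebra.ofCoeff (Finsupp.equivFunOnFinite.symm fun s' => ∑ s : S, if ll sa pl s' s then f.coeff s else 0)

/-!
For `u ≪ st` put `e = φ^{(u⁺s, t u*)}`. The stable value `e` is a fixed point of
`e ↦ ((u⁺s e)* t u*)⁺`, which gives `u⁺s e · e t u* = u⁺ st u* = u` and
`(u⁺s e)* = (e t u*)⁺ = e`; hence `(u⁺s e, e t u*)` is a pair `s' ≪ s`, `t' ≪ t` with
`s' ♯^{φ^{((s')⁺s, t(t')*)}} t' = u`, and it is the only one, since any such pair is recovered
from its product `s't'` by the same formula. So the double sum defining `Z(s) ∗ Z(t)` is a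
reindexing of `Z(st)`.

For bijectivity, `≪` is antisymmetric: if `s ≪ t ≪ s` then `t = (t⁺s⁺) t (s*t*)`, and finiteness
yields an idempotent `F` with `F t = t` and `F s⁺ = F`; as `F` is absorbed by `t⁺`, this forces
`t⁺s⁺ = t⁺`. Symmetrically `s⁺t⁺ = s⁺`, and a singleton kernel admits no two-element left-zero
band, so `s⁺ = t⁺` (dually `s* = t*`). Thus `Z` is unitriangular with respect to the partial
order `≪` on the finite set `S`.
-/

section Kernel
variable {S : Type*} [Semigroup S]

theorem IsKer.mul_self {T : Subsemigroup S} {x : S} (h : IsKer T x) : x * x = x :=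
  (h.2 x h.1).1

theorem mul_eq_of_mem_closure_rIds {s a : S} (ha : a ∈ Subsemigroup.closure (rIds s)) :
    s * a = s := by
  induction ha using Subsemigroup.closure_induction with
  | mem x hx => exact hx.2
  | mul x y _ _ hx hy => rw [← mul_assoc, hx, hy]

theorem mul_eq_of_mem_closure_lIds {s a : S} (ha : a ∈ Subsemigroup.closure (lIds s)) :
    a * s = s := by
  induction ha using Subsemigroup.closure_induction with
  | mem x hx => exact hx.2
  | mul x y _ _ hx hy => rw [mul_assoc, hy, hx]

theorem nle_trans {a b c : S} (hab : nle a b) (hbc : nle b c) : nle a c :=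
  ⟨by rw [← hab.1, mul_assoc, hbc.1], by rw [← hab.2, ← mul_assoc, hbc.2]⟩

theorem nle_antisymm {a b : S} (hab : nle a b) (hba : nle b a) : a = b := by
  rw [← hab.1, hba.2]

theorem eq_mul_mul_of_ll {sa pl : S → S} {s t : S} (hst : ll sa pl s t) (hts : ll sa pl t s) :
    t = (pl t * pl s) * t * (sa s * sa t) := by
  rw [ll] at hst hts
  conv_lhs => rw [hts, hst]
  simp only [mul_assoc]

end Kernel

section FiniteIdempotents
variable {S : Type*} [Semigroup S] [Finite S]

theorem exists_idem_of_mul_mem (s : Set S) (hne : s.Nonempty)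
    (hmul : ∀ x ∈ s, ∀ y ∈ s, x * y ∈ s) : ∃ e ∈ s, e * e = e := by
  let _ : TopologicalSpace S := ⊥
  have : DiscreteTopology S := ⟨rfl⟩
  exact exists_idempotent_in_compact_subsemigroup (fun _ => continuous_of_discreteTopology) s
    hne s.toFinite.isCompact hmul

theorem exists_idem_left_of_eq_mul_mul {t a b p : S} (h : t = a * t * b) (hap : a * p = a) :
    ∃ F : S, F * F = F ∧ F * t = t ∧ F * p = F := by
  obtain ⟨F, ⟨hFp, y, hFy⟩, hF⟩ := exists_idem_of_mul_mem {x | x * p = x ∧ ∃ y, x * t * y = t}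
    ⟨a, hap, b, h.symm⟩ fun x ⟨hxp, y, hxy⟩ x' ⟨hx'p, y', hx'y⟩ =>
      ⟨by rw [mul_assoc, hx'p], y' * y,
        calc x * x' * t * (y' * y) = x * (x' * t * y') * y := by simp only [mul_assoc]
          _ = t := by rw [hx'y, hxy]⟩
  refine ⟨F, hF, ?_, hFp⟩
  rw [← hFy, ← mul_assoc, ← mul_assoc, hF]

theorem exists_idem_right_of_eq_mul_mul {t a b q : S} (h : t = a * t * b) (hqb : q * b = b) :
    ∃ G : S, G * G = G ∧ t * G = t ∧ q * G = G := by
  have : Finite Sᵐᵒᵖ := Finite.of_equiv S MulOpposite.opEquiv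
  obtain ⟨G, hG, hGt, hGq⟩ := exists_idem_left_of_eq_mul_mul (t := MulOpposite.op t)
    (a := .op b) (b := .op a) (p := .op q)
    (by simpa only [← MulOpposite.op_mul, mul_assoc] using congrArg MulOpposite.op h)
    (by rw [← MulOpposite.op_mul, hqb])
  refine ⟨G.unop, ?_, ?_, ?_⟩
  · simpa only [MulOpposite.unop_mul, MulOpposite.unop_op] using congrArg MulOpposite.unop hG
  · simpa only [MulOpposite.unop_mul, MulOpposite.unop_op] using congrArg MulOpposite.unop hGt
  · simpa only [MulOpposite.unop_mul, MulOpposite.unop_op] using congrArg MulOpposite.unop hGq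

end FiniteIdempotents

section Star
variable {S : Type*} [Semigroup S] {sa : S → S}
  (hsa : ∀ s : S, IsKer (Subsemigroup.closure (rIds s)) (sa s))
include hsa

theorem mul_sa (s : S) : s * sa s = s := mul_eq_of_mem_closure_rIds (hsa s).1

theorem sa_mul_sa (s : S) : sa s * sa s = sa s := (hsa s).mul_self

theorem sa_absorb {s e : S} (he : e * e = e) (hse : s * e = s) :
    e * sa s = sa s ∧ sa s * e = sa s :=
  (hsa s).2 e (Subsemigroup.subset_closure ⟨he, hse⟩)

theorem sa_eq_self_of_idem {e : S} (he : e * e = e) : sa e = e :=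
  (sa_absorb hsa he he).1.symm.trans (mul_sa hsa e)

theorem nle_sa_mul (x y : S) : nle (sa (x * y)) (sa y) := by
  have hsub : rIds y ⊆ rIds (x * y) := fun e ⟨he, hye⟩ => ⟨he, by rw [mul_assoc, hye]⟩
  have h := (hsa (x * y)).2 _ (Subsemigroup.closure_mono hsub (hsa y).1)
  exact ⟨h.2, h.1⟩

theorem sa_mul_sa_of_mul_eq {a y c : S} (h : a * (y * sa c) = c) : sa (y * sa c) = sa c := by
  refine nle_antisymm (nle_trans (nle_sa_mul hsa y (sa c)) ?_) ?_
  · rw [sa_eq_self_of_idem hsa (sa_mul_sa hsa c)]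
    exact ⟨sa_mul_sa hsa c, sa_mul_sa hsa c⟩
  · simpa only [h] using nle_sa_mul hsa a (y * sa c)

theorem eq_of_left_zero_pair {e g : S} (he : e * e = e) (hg : g * g = g) (heg : e * g = e)
    (hge : g * e = g) : e = g := by
  have h := (sa_absorb hsa hg heg).1
  rw [sa_eq_self_of_idem hsa he, hge] at h
  exact h.symm

theorem sa_mul_sa_of_ll [Finite S] {pl : S → S} {s t : S} (hst : ll sa pl s t)
    (hts : ll sa pl t s) : sa s * sa t = sa t := by
  obtain ⟨G, hG, htG, hGq⟩ := exists_idem_right_of_eq_mul_mul (eq_mul_mul_of_ll hst hts)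
    (by rw [← mul_assoc, sa_mul_sa hsa])
  have hGsa : G * sa t = sa t := (sa_absorb hsa hG htG).1
  rw [← hGsa, ← mul_assoc, hGq]

end Star

section Plus
variable {S : Type*} [Semigroup S] {pl : S → S}
  (hpl : ∀ s : S, IsKer (Subsemigroup.closure (lIds s)) (pl s))
include hpl

theorem pl_mul (s : S) : pl s * s = s := mul_eq_of_mem_closure_lIds (hpl s).1

theorem pl_mul_pl (s : S) : pl s * pl s = pl s := (hpl s).mul_self

theorem pl_absorb {s e : S} (he : e * e = e) (hes : e * s = s) :
    e * pl s = pl s ∧ pl s * e = pl s :=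
  (hpl s).2 e (Subsemigroup.subset_closure ⟨he, hes⟩)

theorem pl_eq_self_of_idem {e : S} (he : e * e = e) : pl e = e :=
  (pl_absorb hpl he he).2.symm.trans (pl_mul hpl e)

theorem nle_pl_mul (x y : S) : nle (pl (x * y)) (pl x) := by
  have hsub : lIds x ⊆ lIds (x * y) := fun e ⟨he, hex⟩ => ⟨he, by rw [← mul_assoc, hex]⟩
  have h := (hpl (x * y)).2 _ (Subsemigroup.closure_mono hsub (hpl x).1)
  exact ⟨h.2, h.1⟩

theorem pl_pl_mul_of_mul_eq {y b c : S} (h : pl c * y * b = c) : pl (pl c * y) = pl c := by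
  refine nle_antisymm (nle_trans (nle_pl_mul hpl (pl c) y) ?_) ?_
  · rw [pl_eq_self_of_idem hpl (pl_mul_pl hpl c)]
    exact ⟨pl_mul_pl hpl c, pl_mul_pl hpl c⟩
  · simpa only [h] using nle_pl_mul hpl (pl c * y) b

theorem eq_of_right_zero_pair {e g : S} (he : e * e = e) (hg : g * g = g) (heg : e * g = g)
    (hge : g * e = e) : e = g := by
  have h := (pl_absorb hpl hg hge).2
  rw [pl_eq_self_of_idem hpl he, heg] at h
  exact h.symm

theorem pl_mul_pl_of_ll [Finite S] {sa : S → S} {s t : S} (hst : ll sa pl s t)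
    (hts : ll sa pl t s) : pl t * pl s = pl t := by
  obtain ⟨F, hF, hFt, hFp⟩ := exists_idem_left_of_eq_mul_mul (eq_mul_mul_of_ll hst hts)
    (by rw [mul_assoc, pl_mul_pl hpl])
  have hplF : pl t * F = pl t := (pl_absorb hpl hF hFt).2
  rw [← hplF, mul_assoc, hFp]

end Plus

section Order
variable {S : Type*} [Semigroup S] {sa pl : S → S}
  (hsa : ∀ s : S, IsKer (Subsemigroup.closure (rIds s)) (sa s))
  (hpl : ∀ s : S, IsKer (Subsemigroup.closure (lIds s)) (pl s))
include hsa hpl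

theorem ll_refl (s : S) : ll sa pl s s := by
  rw [ll, pl_mul hpl, mul_sa hsa]

theorem ll_antisymm [Finite S] {s t : S} (hst : ll sa pl s t) (hts : ll sa pl t s) : s = t := by
  have hpl_eq : pl s = pl t := eq_of_left_zero_pair hsa (pl_mul_pl hpl s) (pl_mul_pl hpl t)
    (pl_mul_pl_of_ll hpl hts hst) (pl_mul_pl_of_ll hpl hst hts)
  have hsa_eq : sa s = sa t := eq_of_right_zero_pair hpl (sa_mul_sa hsa s) (sa_mul_sa hsa t)
    (sa_mul_sa_of_ll hsa hst hts) (sa_mul_sa_of_ll hsa hts hst)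
  rw [hst, hpl_eq, hsa_eq, pl_mul hpl, mul_sa hsa]

abbrev llPartialOrder [Finite S] (htrans : Transitive (ll sa pl)) : PartialOrder S where
  le := ll sa pl
  le_refl := ll_refl hsa hpl
  le_trans _ _ _ := @htrans _ _ _
  le_antisymm _ _ := ll_antisymm hsa hpl

end Order

section Phi
variable {S : Type*} [Semigroup S] {sa pl : S → S}
  (hsa : ∀ s : S, IsKer (Subsemigroup.closure (rIds s)) (sa s))
  (hpl : ∀ s : S, IsKer (Subsemigroup.closure (lIds s)) (pl s))

include hpl in
theorem phiF_mul_self (x y : S) : phiF sa pl x y * phiF sa pl x y = phiF sa pl x y :=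
  pl_mul_pl hpl _

include hsa hpl

theorem sa_phiF_absorb (x y : S) :
    sa x * phiF sa pl x y = phiF sa pl x y ∧ phiF sa pl x y * sa x = phiF sa pl x y :=
  pl_absorb hpl (sa_mul_sa hsa x) (by rw [← mul_assoc, sa_mul_sa hsa])

theorem mul_phiF_mul (x y : S) : x * phiF sa pl x y * y = x * y :=
  calc x * phiF sa pl x y * y = x * (phiF sa pl x y * sa x) * y := by
        rw [(sa_phiF_absorb hsa hpl x y).2]
    _ = x * (pl (sa x * y) * (sa x * y)) := by simp only [phiF, mul_assoc]
    _ = x * y := by rw [pl_mul hpl, ← mul_assoc, mul_sa hsa]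

theorem mul_phiF_of_idem {x e : S} (y : S) (he : e * e = e) (hxe : x * e = x) :
    e * phiF sa pl x y = phiF sa pl x y :=
  (pl_absorb hpl he (by rw [← mul_assoc, (sa_absorb hsa he hxe).1])).1

theorem sa_eq_phiF {x y : S} (h : x * phiF sa pl x y = x) : sa x = phiF sa pl x y :=
  (sa_absorb hsa (phiF_mul_self hpl x y) h).2.symm.trans (sa_phiF_absorb hsa hpl x y).1

theorem sa_mul_phiF_mul_sa (x y : S) :
    sa (x * phiF sa pl x y) * sa x = sa (x * phiF sa pl x y) := by
  have h : sa (x * phiF sa pl x y) * phiF sa pl x y = sa (x * phiF sa pl x y) :=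
    (sa_absorb hsa (phiF_mul_self hpl x y) (by rw [mul_assoc, phiF_mul_self hpl x y])).2
  rw [← h, mul_assoc, (sa_phiF_absorb hsa hpl x y).2]

variable (u v : S)

theorem phiSeq_snd_succ (i : ℕ) :
    (phiSeq sa pl u v (i + 1)).2 = sa (phiSeq sa pl u v i).1 * v := by
  induction i with
  | zero => rfl
  | succ i ih =>
    change sa (phiSeq sa pl u v (i + 1)).1 * (phiSeq sa pl u v (i + 1)).2 = _
    rw [ih, ← mul_assoc, phiSeq, sa_mul_phiF_mul_sa hsa hpl]

theorem phiF_phiSeq (i : ℕ) :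
    phiF sa pl (phiSeq sa pl u v i).1 (phiSeq sa pl u v i).2 =
      phiF sa pl (phiSeq sa pl u v i).1 v := by
  cases i with
  | zero => rfl
  | succ i =>
    change pl (sa ((phiSeq sa pl u v i).1 * phiF sa pl _ _) * _) = _
    rw [phiSeq_snd_succ hsa hpl, ← mul_assoc, sa_mul_phiF_mul_sa hsa hpl]
    rfl

theorem phiSeq_fst_succ (i : ℕ) :
    (phiSeq sa pl u v (i + 1)).1 =
      u * phiF sa pl (phiSeq sa pl u v i).1 (phiSeq sa pl u v i).2 := by
  induction i with
  | zero => rfl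
  | succ i ih =>
    change (phiSeq sa pl u v (i + 1)).1 * phiF sa pl (phiSeq sa pl u v (i + 1)).1 _ = _
    rw [ih, mul_assoc, mul_phiF_of_idem hsa hpl _ (phiF_mul_self hpl _ _)
      (by rw [mul_assoc, phiF_mul_self hpl])]

theorem phiSeq_fst_mul (i : ℕ) : (phiSeq sa pl u v i).1 * v = u * v := by
  induction i with
  | zero => rfl
  | succ i ih =>
    change (phiSeq sa pl u v i).1 * phiF sa pl _ _ * v = _
    rw [phiF_phiSeq hsa hpl, mul_phiF_mul hsa hpl, ih]

theorem IsPhiLim.spec {e : S} (h : IsPhiLim sa pl u v e) :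
    e * e = e ∧ u * e * v = u * v ∧ sa (u * e) = e ∧ pl (e * v) = e := by
  obtain ⟨N, hN⟩ := h
  have hN0 := hN N le_rfl
  have hfix : phiF sa pl (u * e) v = e := by
    have h := hN (N + 1) (Nat.le_succ N)
    rwa [phiF_phiSeq hsa hpl, phiSeq_fst_succ hsa hpl, hN0] at h
  have he : e * e = e := hN0 ▸ phiF_mul_self hpl _ _
  have hsa_ue : sa (u * e) = e := by
    rw [sa_eq_phiF hsa hpl (by rw [hfix, mul_assoc, he]), hfix]
  refine ⟨he, ?_, hsa_ue, ?_⟩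
  · rw [← hN0, ← phiSeq_fst_succ hsa hpl, phiSeq_fst_mul hsa hpl]
  · calc pl (e * v) = phiF sa pl (u * e) v := by rw [phiF, hsa_ue]
      _ = e := hfix

end Phi

section Sharp
variable {S : Type*}

def IsSharpPair [Mul S] (sa pl : S → S) (phiV : S → S → S) (s t : S) (x : S × S) : Prop :=
  ll sa pl x.1 s ∧ ll sa pl x.2 t ∧ pl x.1 = pl (x.1 * x.2) ∧ sa x.2 = sa (x.1 * x.2) ∧
    sa x.1 = phiV (pl x.1 * s) (t * sa x.2) ∧ pl x.2 = phiV (pl x.1 * s) (t * sa x.2)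

def sharpFactor [Mul S] (sa pl : S → S) (phiV : S → S → S) (s t u : S) : S × S :=
  (pl u * s * phiV (pl u * s) (t * sa u), phiV (pl u * s) (t * sa u) * (t * sa u))

theorem sum_sharpE_eq_sum_isSharpPair [Semigroup S] [Fintype S] (sa pl : S → S)
    (phiV : S → S → S) (s t : S) :
    (∑ s' ∈ Finset.univ.filter (fun s' => ll sa pl s' s),
      ∑ t' ∈ Finset.univ.filter (fun t' => ll sa pl t' t),
        sharpE sa pl (phiV (pl s' * s) (t * sa t')) s' t') =
      ∑ x ∈ Finset.univ.filter (IsSharpPair sa pl phiV s t),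
        MonoidAlgebra.single (x.1 * x.2) (1 : ℂ) := by
  rw [← Finset.sum_product', ← Finset.filter_product, Finset.univ_product_univ,
    Finset.sum_filter, Finset.sum_filter]
  refine Finset.sum_congr rfl fun x _ => ?_
  simp only [sharpE, IsSharpPair, ← ite_and, and_assoc]
  congr

variable [Semigroup S] {sa pl : S → S} {phiV : S → S → S} {s t u : S}

theorem IsSharpPair.sharpFactor_mul {x : S × S} (hx : IsSharpPair sa pl phiV s t x) :
    sharpFactor sa pl phiV s t (x.1 * x.2) = x := by
  obtain ⟨hs, ht, hpl_eq, hsa_eq, hsa_phi, hpl_phi⟩ := hx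
  rw [sharpFactor, ← hpl_eq, ← hsa_eq]
  refine Prod.ext ?_ ?_
  · rw [← hsa_phi]; exact hs.symm
  · rw [← hpl_phi, ← mul_assoc]; exact ht.symm

variable (hsa : ∀ s : S, IsKer (Subsemigroup.closure (rIds s)) (sa s))
  (hpl : ∀ s : S, IsKer (Subsemigroup.closure (lIds s)) (pl s))
  (hphiV : ∀ u v : S, IsPhiLim sa pl u v (phiV u v))
include hsa hpl hphiV

theorem fst_sharpFactor_mul_snd (u : S) :
    (sharpFactor sa pl phiV s t u).1 * (sharpFactor sa pl phiV s t u).2 =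
      pl u * (s * t) * sa u := by
  obtain ⟨he, hmul, -, -⟩ := (hphiV (pl u * s) (t * sa u)).spec hsa hpl
  set e := phiV (pl u * s) (t * sa u)
  calc (pl u * s * e) * (e * (t * sa u)) = pl u * s * (t * sa u) := by
        rw [← mul_assoc, mul_assoc _ e e, he, hmul]
    _ = pl u * (s * t) * sa u := by simp only [mul_assoc]

theorem IsSharpPair.ll_mul {x : S × S} (hx : IsSharpPair sa pl phiV s t x) :
    ll sa pl (x.1 * x.2) (s * t) := by
  have h := fst_sharpFactor_mul_snd hsa hpl hphiV (s := s) (t := t) (x.1 * x.2)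
  rwa [hx.sharpFactor_mul] at h

theorem isSharpPair_sharpFactor (hu : ll sa pl u (s * t)) :
    IsSharpPair sa pl phiV s t (sharpFactor sa pl phiV s t u) := by
  have hprod := fst_sharpFactor_mul_snd hsa hpl hphiV (s := s) (t := t) u
  rw [← hu] at hprod
  simp only [IsSharpPair, sharpFactor, ll] at hprod ⊢
  obtain ⟨-, -, hsa_ue, hpl_ev⟩ := (hphiV (pl u * s) (t * sa u)).spec hsa hpl
  set e := phiV (pl u * s) (t * sa u)
  have hpl_fst : pl (pl u * s * e) = pl u := by
    rw [mul_assoc]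
    exact pl_pl_mul_of_mul_eq hpl (by rw [← mul_assoc (pl u)]; exact hprod)
  have hsa_snd : sa (e * (t * sa u)) = sa u := by
    rw [← mul_assoc]
    exact sa_mul_sa_of_mul_eq hsa (a := pl u * s * e) (by rw [mul_assoc e t]; exact hprod)
  rw [hprod, hpl_fst, hsa_snd, hsa_ue, hpl_ev]
  exact ⟨rfl, by simp only [mul_assoc], rfl, rfl, rfl, rfl⟩

theorem sum_sharpE_eq_Zb [Fintype S] (s t : S) :
    (∑ s' ∈ Finset.univ.filter (fun s' => ll sa pl s' s),
      ∑ t' ∈ Finset.univ.filter (fun t' => ll sa pl t' t),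
        sharpE sa pl (phiV (pl s' * s) (t * sa t')) s' t') = Zb sa pl (s * t) := by
  rw [sum_sharpE_eq_sum_isSharpPair, Zb]
  refine Finset.sum_nbij' (fun x => x.1 * x.2) (sharpFactor sa pl phiV s t) ?_ ?_ ?_ ?_
    fun _ _ => rfl
  all_goals simp only [Finset.mem_filter, Finset.mem_univ, true_and]
  · exact fun x hx => hx.ll_mul hsa hpl hphiV
  · exact fun u hu => isSharpPair_sharpFactor hsa hpl hphiV hu
  · exact fun x hx => hx.sharpFactor_mul
  · exact fun u hu => (fst_sharpFactor_mul_snd hsa hpl hphiV u).trans hu.symm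

end Sharp

section Zeta
variable {S : Type*} [Semigroup S] [Fintype S] {sa pl : S → S}

theorem coeff_Zhat (f : MonoidAlgebra ℂ S) (a : S) :
    (Zhat sa pl f).coeff a = ∑ x : S, if ll sa pl a x then f.coeff x else 0 :=
  rfl

variable (sa pl) in
noncomputable def zhatLinearMap : MonoidAlgebra ℂ S →ₗ[ℂ] MonoidAlgebra ℂ S where
  toFun := Zhat sa pl
  map_add' f g := by
    ext a
    simp only [MonoidAlgebra.coeff_add, Finsupp.add_apply, coeff_Zhat, ← Finset.sum_add_distrib,
      ite_add_ite, add_zero]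
  map_smul' c f := by
    ext a
    simp only [MonoidAlgebra.coeff_smul, Finsupp.smul_apply, coeff_Zhat, smul_eq_mul,
      Finset.mul_sum, mul_ite, mul_zero, RingHom.id_apply]

variable (hsa : ∀ s : S, IsKer (Subsemigroup.closure (rIds s)) (sa s))
  (hpl : ∀ s : S, IsKer (Subsemigroup.closure (lIds s)) (pl s)) (htrans : Transitive (ll sa pl))
include hsa hpl htrans

/-- `Z` is unitriangular: at a `≪`-maximal point `m` of the support of `f`, `(Z f)(m) = f(m)`. -/
theorem eq_zero_of_Zhat_eq_zero {f : MonoidAlgebra ℂ S} (hf : Zhat sa pl f = 0) : f = 0 := by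
  let _ := llPartialOrder hsa hpl htrans
  by_contra hne
  obtain ⟨m, hm⟩ := Finset.exists_maximal (s := f.coeff.support)
    (Finsupp.support_nonempty_iff.2 fun h => hne (MonoidAlgebra.ext h))
  have hZm : (Zhat sa pl f).coeff m = f.coeff m := by
    rw [coeff_Zhat, Finset.sum_eq_single m, if_pos (ll_refl hsa hpl m)]
    · intro x _ hxm
      refine ite_eq_right_iff.2 fun hmx => Finsupp.notMem_support_iff.1 fun hx => hxm ?_
      exact le_antisymm (hm.2 hx hmx) hmx
    · exact fun h => (h (Finset.mem_univ m)).elim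
  rw [hf] at hZm
  exact Finsupp.mem_support_iff.1 hm.1 hZm.symm

theorem Zhat_bijective : Function.Bijective (Zhat sa pl) := by
  have hinj : Function.Injective (zhatLinearMap sa pl) :=
    (injective_iff_map_eq_zero _).2 fun _ => eq_zero_of_Zhat_eq_zero hsa hpl htrans
  exact ⟨hinj, LinearMap.injective_iff_surjective.1 hinj⟩

end Zeta

/-- If `≪` is transitive, then `Z(s) ∗ Z(t) = Z(st)` where
`Z(s) ∗ Z(t) = Σ_{s' ≪ s, t' ≪ t} s' ♯^{φ^{((s')⁺ s, t (t')*)}} t'`; consequently the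
linear extension of `Z` is a bijective multiplicative map, i.e. an isomorphism of
`ℂ`-algebras from `(ℂS, ∗)` to `ℂS`. -/
theorem stmt19 {S : Type*} [Semigroup S] [Fintype S] (sa pl : S → S)
    (hsa : ∀ s : S, IsKer (Subsemigroup.closure (rIds s)) (sa s))
    (hpl : ∀ s : S, IsKer (Subsemigroup.closure (lIds s)) (pl s))
    (htrans : Transitive (ll sa pl))
    (phiV : S → S → S) (hphiV : ∀ u v : S, IsPhiLim sa pl u v (phiV u v)) :
    (∀ s t : S,
      (∑ s' ∈ Finset.univ.filter (fun s' => ll sa pl s' s),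
        ∑ t' ∈ Finset.univ.filter (fun t' => ll sa pl t' t),
          sharpE sa pl (phiV (pl s' * s) (t * sa t')) s' t') = Zb sa pl (s * t)) ∧
    Function.Bijective (Zhat (S := S) sa pl) :=
  ⟨sum_sharpE_eq_Zb hsa hpl hphiV, Zhat_bijective hsa hpl htrans⟩
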